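/- arXiv:1212.5374 — 3 statements merged into one kernel-verified Lean document; each statement's English description precedes it below -/
import Mathlib

section
/- For all integers m, k with 0 ≤ 2k ≤ m and all real numbers p₁, p₂, writing p = p₁ + i·p₂ ∈ ℂ, one has p^(m−k) · conj(p)^k = Σ_{l=0}^{m} ( Σ_{h=0}^{⌊l/2⌋} i^(l−2h) · C(m−2k, l−2h) · C(k, h) ) · p₁^(m−l) · p₂^l, where C(·,·) denotes the binomial coefficient (equal to 0 whenever the lower index exceeds the upper index). -/
open Finset

/-- Algebraic core of Proposition 2: expansion of `p^(m-k) * conj(p)^k` for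
`p = p₁ + i p₂` in terms of the real monomials `p₁^(m-l) p₂^l`. -/
theorem stmt_0 (m k : ℕ) (hk : 2 * k ≤ m) (p₁ p₂ : ℝ) :
    ((p₁ : ℂ) + Complex.I * p₂) ^ (m - k) *
      ((starRingEnd ℂ) ((p₁ : ℂ) + Complex.I * p₂)) ^ k =
    ∑ l ∈ Finset.range (m + 1),
      (∑ h ∈ Finset.range (l / 2 + 1),
        Complex.I ^ (l - 2 * h) * ((m - 2 * k).choose (l - 2 * h) : ℂ) *
          (k.choose h : ℂ)) * (p₁ : ℂ) ^ (m - l) * (p₂ : ℂ) ^ l := by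
  set n := m - 2 * k with hn
  have hm : m = n + 2 * k := by omega
  set z : ℂ := (p₁ : ℂ) + Complex.I * p₂ with hz
  have hconj : (starRingEnd ℂ) z = (p₁ : ℂ) - Complex.I * p₂ := by
    simp [hz, map_add, map_mul, Complex.conj_I, Complex.conj_ofReal]
    ring
  have hzz : z * (starRingEnd ℂ) z = (p₁ : ℂ) ^ 2 + (p₂ : ℂ) ^ 2 := by
    rw [hconj, hz]
    have : Complex.I ^ 2 = -1 := Complex.I_sq
    ring_nf
    rw [this]; ring
  have hL : z ^ (m - k) * ((starRingEnd ℂ) z) ^ k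
      = z ^ n * ((p₁ : ℂ) ^ 2 + (p₂ : ℂ) ^ 2) ^ k := by
    have h1 : m - k = n + k := by omega
    rw [h1, pow_add, mul_assoc, ← mul_pow, hzz]
  rw [hL]
  have hzn : z ^ n = ∑ j ∈ range (n + 1),
      (n.choose j : ℂ) * Complex.I ^ j * (p₁ : ℂ) ^ (n - j) * (p₂ : ℂ) ^ j := by
    have : z = Complex.I * p₂ + p₁ := by rw [hz]; ring
    rw [this, add_pow]
    refine sum_congr rfl fun j hj => ?_
    rw [mul_pow]; ring
  have hA : ((p₁ : ℂ) ^ 2 + (p₂ : ℂ) ^ 2) ^ k = ∑ h ∈ range (k + 1),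
      (k.choose h : ℂ) * (p₁ : ℂ) ^ (2 * (k - h)) * (p₂ : ℂ) ^ (2 * h) := by
    have : ((p₁ : ℂ) ^ 2 + (p₂ : ℂ) ^ 2) = (p₂ : ℂ) ^ 2 + (p₁ : ℂ) ^ 2 := by ring
    rw [this, add_pow]
    refine sum_congr rfl fun h hh => ?_
    rw [← pow_mul, ← pow_mul]; ring
  rw [hzn, hA, sum_mul_sum]
  -- define G on sigma type
  set G : (Σ _ : ℕ, ℕ) → ℂ := fun x =>
    Complex.I ^ (x.1 - 2 * x.2) * (n.choose (x.1 - 2 * x.2) : ℂ) * (k.choose x.2 : ℂ)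
      * (p₁ : ℂ) ^ (m - x.1) * (p₂ : ℂ) ^ x.1 with hG
  have hRHS : ∑ l ∈ range (m + 1),
      (∑ h ∈ range (l / 2 + 1),
        Complex.I ^ (l - 2 * h) * (n.choose (l - 2 * h) : ℂ) * (k.choose h : ℂ))
        * (p₁ : ℂ) ^ (m - l) * (p₂ : ℂ) ^ l
      = ∑ x ∈ (range (m + 1)).sigma (fun l => range (l / 2 + 1)), G x := by
    rw [Finset.sum_sigma]
    refine sum_congr rfl fun l hl => ?_
    rw [sum_mul, sum_mul]
  rw [hRHS]
  set e : ℕ × ℕ → (Σ _ : ℕ, ℕ) := fun p => ⟨p.1 + 2 * p.2, p.2⟩ with he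
  set T := (range (n + 1)) ×ˢ (range (k + 1)) with hT
  have hinj : ∀ x ∈ T, ∀ y ∈ T, e x = e y → x = y := by
    intro x _ y _ hxy
    simp only [he, Sigma.mk.inj_iff, heq_eq_eq] at hxy
    obtain ⟨h1, h2⟩ := hxy
    exact Prod.ext (by omega) h2
  have hsub : T.image e ⊆ (range (m + 1)).sigma (fun l => range (l / 2 + 1)) := by
    intro x hx
    simp only [Finset.mem_image, hT, Finset.mem_product, Finset.mem_range] at hx
    obtain ⟨p, ⟨h1, h2⟩, rfl⟩ := hx
    simp only [Finset.mem_sigma, Finset.mem_range, he]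
    omega
  have hzero : ∀ x ∈ (range (m + 1)).sigma (fun l => range (l / 2 + 1)),
      x ∉ T.image e → G x = 0 := by
    intro x hx hnx
    simp only [Finset.mem_sigma, Finset.mem_range] at hx
    by_cases hk2 : k < x.2
    · rw [hG]
      simp [Nat.choose_eq_zero_of_lt hk2]
    · by_cases hn2 : n < x.1 - 2 * x.2
      · rw [hG]
        simp [Nat.choose_eq_zero_of_lt hn2]
      · exfalso
        apply hnx
        simp only [Finset.mem_image, hT, Finset.mem_product, Finset.mem_range]
        refine ⟨(x.1 - 2 * x.2, x.2), ⟨by omega, by omega⟩, ?_⟩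
        simp only [he]
        have : x.1 - 2 * x.2 + 2 * x.2 = x.1 := by omega
        rw [this]
  rw [← Finset.sum_subset hsub hzero, Finset.sum_image hinj]
  rw [← Finset.sum_product']
  refine sum_congr rfl fun p hp => ?_
  simp only [hT, Finset.mem_product, Finset.mem_range] at hp
  obtain ⟨h1, h2⟩ := hp
  simp only [hG, he]
  have e1 : p.1 + 2 * p.2 - 2 * p.2 = p.1 := by omega
  have e2 : m - (p.1 + 2 * p.2) = (n - p.1) + 2 * (k - p.2) := by omega
  rw [e1, e2, pow_add, pow_add]
  ring
end

section
/- For every integer m ≥ 0, the (m+1) × (m+1) complex matrix J_m whose (k+1, l+1) entry (with 0 ≤ k, l ≤ m) is J_m^(k+1, l+1) = Σ_{h=0}^{⌊l/2⌋} i^(l−2h) · C(m−2k, l−2h) · C(k, h) when 2k ≤ m, and J_m^(k+1, l+1) = conj( J_m^(m−k+1, l+1) ) when 2k > m, is invertible. Consequently, for any complex random variable P = P₁ + i·P₂ with E[|P|^m] < ∞, the vector of real joint moments (E[P₁^m·P₂^0], E[P₁^(m−1)·P₂^1], …, E[P₁^0·P₂^m]) equals J_m^(−1) applied to the vector of complex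 joint moments (M_{m,0}, M_{m−1,1}, …, M_{0,m}), where M_{m−k,k} = E[P^(m−k)·conj(P)^k]. -/
open Finset MeasureTheory Matrix

/-- Entry of the matrix `J_m` for rows with `2k ≤ m`. -/
noncomputable def Jent (m k l : ℕ) : ℂ :=
  ∑ h ∈ Finset.range (l / 2 + 1),
    Complex.I ^ (l - 2 * h) * ((m - 2 * k).choose (l - 2 * h) : ℂ) * (k.choose h : ℂ)

/-- The `(m+1) × (m+1)` matrix `J_m` of Proposition 2. -/
noncomputable def Jmat (m : ℕ) : Matrix (Fin (m + 1)) (Fin (m + 1)) ℂ :=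
  fun k l =>
    if 2 * (k : ℕ) ≤ m then Jent m (k : ℕ) (l : ℕ)
    else (starRingEnd ℂ) (Jent m (m - (k : ℕ)) (l : ℕ))

/-!
For `2k ≤ m` and `p = x + i y`, the identity `p^(m-k) conj(p)^k = (x² + y²)^k (x + i y)^(m-2k)`,
expanded binomially, says that `J_m` maps the real monomials `(x^(m-l) y^l)_l` to the complex
monomials `(p^(m-k) conj(p)^k)_k`; the rows with `2k > m` follow by conjugation. Taking
expectations gives `J_m R = M`, where `R` and `M` are the vectors of real and complex moments.

For invertibility, evaluate at the points `p_j = j + i`, `j = 0, …, m`. The matrix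
`(p_j^(m-k) conj(p_j)^k)_{j,k}` is (real monomials at `p_j`) `* J_mᵀ`, and it is also
`diag(p_j^m)` times the Vandermonde matrix of the distinct numbers `conj(p_j) / p_j`.
-/

theorem Jent_expansion {m k : ℕ} (hk : 2 * k ≤ m) (x y : ℂ) :
    (x + y * Complex.I) ^ (m - k) * (x - y * Complex.I) ^ k =
      ∑ l ∈ range (m + 1), Jent m k l * x ^ (m - l) * y ^ l := by
  simp only [Jent, sum_mul]
  set n := m - 2 * k
  have hfactor : (x + y * Complex.I) ^ (m - k) * (x - y * Complex.I) ^ k =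
      (y ^ 2 + x ^ 2) ^ k * (y * Complex.I + x) ^ n := by
    have hnorm : (x + y * Complex.I) * (x - y * Complex.I) = y ^ 2 + x ^ 2 := by
      linear_combination (-y ^ 2) * Complex.I_sq
    rw [show m - k = n + k by omega, pow_add, mul_assoc, ← mul_pow, hnorm]
    ring
  rw [hfactor, add_pow, add_pow, sum_mul_sum, ← sum_product', sum_sigma']
  -- the `(h, j)` term of the product of the binomial expansions
  -- is the `h`-th term of `Jent m k (2h + j)`
  refine sum_of_injOn (fun p => ⟨2 * p.1 + p.2, p.1⟩) ?_ ?_ ?_ ?_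
  · rintro ⟨h, j⟩ - ⟨h', j'⟩ - he
    simp only [Sigma.mk.injEq] at he
    grind
  · rintro ⟨h, j⟩ hp
    simp only [coe_product, Set.mem_prod, mem_coe, mem_range] at hp
    simp only [coe_sigma, Set.mem_sigma_iff, mem_coe, mem_range]
    omega
  · rintro ⟨l, h⟩ hlh hnot
    simp only [mem_sigma, mem_range] at hlh
    by_cases hh : h ≤ k
    · have hj : n < l - 2 * h := by
        by_contra! hj
        refine hnot ⟨(h, l - 2 * h), ?_, ?_⟩
        · simp only [coe_product, coe_range, Set.mem_prod, Set.mem_Iio]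
          omega
        · simp only [Sigma.mk.injEq, heq_eq_eq, and_true]
          omega
      simp [Nat.choose_eq_zero_of_lt hj]
    · simp [Nat.choose_eq_zero_of_lt (not_le.mp hh)]
  · rintro ⟨h, j⟩ hp
    simp only [mem_product, mem_range] at hp
    simp only [Nat.add_sub_cancel_left]
    rw [show m - (2 * h + j) = 2 * (k - h) + (n - j) by omega]
    ring

theorem Jmat_mulVec_re_pow_mul_im_pow (m : ℕ) (z : ℂ) :
    Jmat m *ᵥ (fun l : Fin (m + 1) => (z.re : ℂ) ^ (m - (l : ℕ)) * (z.im : ℂ) ^ (l : ℕ)) =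
      fun k : Fin (m + 1) => z ^ (m - (k : ℕ)) * (starRingEnd ℂ) z ^ (k : ℕ) := by
  funext k
  have hk : (k : ℕ) ≤ m := Nat.lt_succ_iff.mp k.isLt
  have hconj : (starRingEnd ℂ) z = z.re - z.im * Complex.I := by
    apply Complex.ext <;> simp
  have hz : z = z.re + z.im * Complex.I := (Complex.re_add_im z).symm
  set x := z.re
  set y := z.im
  rw [hconj, hz]
  simp only [mulVec, dotProduct, Jmat, ← mul_assoc]
  split_ifs with hrow
  · rw [Jent_expansion hrow]
    exact (Fin.sum_univ_eq_sum_range (fun l => Jent m k l * (x : ℂ) ^ (m - l) * (y : ℂ) ^ l) _)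
  · have hdual := congrArg (starRingEnd ℂ) (Jent_expansion (show 2 * (m - k) ≤ m by omega)
      (x : ℂ) y)
    simp only [map_mul, map_pow, map_sum, map_add, map_sub, Complex.conj_ofReal,
      Complex.conj_I, Nat.sub_sub_self hk] at hdual
    rw [Fin.sum_univ_eq_sum_range
        (fun l => (starRingEnd ℂ) (Jent m (m - k) l) * (x : ℂ) ^ (m - l) * (y : ℂ) ^ l),
      ← hdual]
    ring

theorem injective_conj_div_self_ofReal_add_I :
    Function.Injective fun x : ℝ => (starRingEnd ℂ) (x + Complex.I) / (x + Complex.I) := by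
  intro a b hab
  have hne : ∀ x : ℝ, (x : ℂ) + Complex.I ≠ 0 := fun x h => by
    simpa using congrArg Complex.im h
  rw [div_eq_div_iff (hne a) (hne b)] at hab
  simp only [map_add, Complex.conj_ofReal, Complex.conj_I] at hab
  have hdiff : ((a - b : ℝ) : ℂ) * (2 * Complex.I) = 0 := by
    push_cast
    linear_combination hab
  simpa [sub_eq_zero, Complex.I_ne_zero] using hdiff

theorem isUnit_det_Jmat (m : ℕ) : IsUnit (Jmat m).det := by
  set z : Fin (m + 1) → ℂ := fun i => ((i : ℕ) : ℝ) + Complex.I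
  have hz : ∀ i, z i ≠ 0 := fun i h => by simpa [z] using congrArg Complex.im h
  set Z : Matrix (Fin (m + 1)) (Fin (m + 1)) ℂ :=
    of fun i k => z i ^ (m - (k : ℕ)) * (starRingEnd ℂ) (z i) ^ (k : ℕ)
  have hZ_factor : Z = (of fun i l : Fin (m + 1) =>
      ((z i).re : ℂ) ^ (m - (l : ℕ)) * ((z i).im : ℂ) ^ (l : ℕ)) * (Jmat m)ᵀ := by
    ext i k
    simpa [Z, mul_apply, mulVec, dotProduct, mul_comm] using
      (congrFun (Jmat_mulVec_re_pow_mul_im_pow m (z i)) k).symm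
  have hZ_vandermonde : Z = diagonal (fun i => z i ^ m) *
      vandermonde (fun i => (starRingEnd ℂ) (z i) / z i) := by
    ext i k
    simp only [Z, diagonal_mul, vandermonde_apply, of_apply]
    rw [div_pow, pow_sub₀ _ (hz i) (Nat.lt_succ_iff.mp k.isLt)]
    ring
  have hZ_det : Z.det ≠ 0 := by
    rw [hZ_vandermonde, det_mul, det_diagonal]
    refine mul_ne_zero (prod_ne_zero_iff.mpr fun i _ => pow_ne_zero _ (hz i)) ?_
    exact det_vandermonde_ne_zero_iff.mpr
      (injective_conj_div_self_ofReal_add_I.comp (Nat.cast_injective.comp Fin.val_injective))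
  rw [hZ_factor, det_mul, det_transpose] at hZ_det
  exact isUnit_iff_ne_zero.mpr (right_ne_zero_of_mul hZ_det)

theorem Matrix.mulVec_integral {Ω ι κ 𝕜 : Type*} [MeasurableSpace Ω] {μ : Measure Ω}
    [Fintype κ] [RCLike 𝕜] (A : Matrix ι κ 𝕜) {f : Ω → κ → 𝕜}
    (hf : ∀ l, Integrable (fun ω => f ω l) μ) :
    A *ᵥ (fun l => ∫ ω, f ω l ∂μ) = fun k => ∫ ω, (A *ᵥ f ω) k ∂μ := by
  funext k
  simp only [mulVec, dotProduct]
  rw [integral_finsetSum _ fun l _ => (hf l).const_mul _]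
  simp only [integral_const_mul]

theorem integrable_re_pow_mul_im_pow {Ω : Type*} [MeasurableSpace Ω] {μ : Measure Ω}
    {P : Ω → ℂ} (hP : AEStronglyMeasurable P μ) {a b : ℕ}
    (hint : Integrable (fun ω => ‖P ω‖ ^ (a + b)) μ) :
    Integrable (fun ω => ((P ω).re : ℂ) ^ a * ((P ω).im : ℂ) ^ b) μ := by
  refine hint.mono' (by fun_prop) (ae_of_all _ fun ω => ?_)
  rw [pow_add, norm_mul, norm_pow, norm_pow, Complex.norm_real, Complex.norm_real]
  gcongr
  exacts [Complex.abs_re_le_norm _, Complex.abs_im_le_norm _]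

theorem stmt_1_general {Ω : Type*} [MeasurableSpace Ω] (μ : Measure Ω)
    (m : ℕ) (P : Ω → ℂ) (hP : Measurable P)
    (hint : Integrable (fun ω => ‖P ω‖ ^ m) μ) :
    IsUnit (Jmat m).det ∧
      (fun l : Fin (m + 1) =>
          ((∫ ω, (P ω).re ^ (m - (l : ℕ)) * (P ω).im ^ (l : ℕ) ∂μ : ℝ) : ℂ)) =
        (Jmat m)⁻¹ *ᵥ
          (fun k : Fin (m + 1) =>
            ∫ ω, (P ω) ^ (m - (k : ℕ)) * ((starRingEnd ℂ) (P ω)) ^ (k : ℕ) ∂μ) := by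
  have hunit := isUnit_det_Jmat m
  have hmoments : Jmat m *ᵥ (fun l : Fin (m + 1) =>
      ((∫ ω, (P ω).re ^ (m - (l : ℕ)) * (P ω).im ^ (l : ℕ) ∂μ : ℝ) : ℂ)) =
        fun k : Fin (m + 1) =>
          ∫ ω, (P ω) ^ (m - (k : ℕ)) * ((starRingEnd ℂ) (P ω)) ^ (k : ℕ) ∂μ := by
    simp_rw [← integral_complex_ofReal, Complex.ofReal_mul, Complex.ofReal_pow]
    rw [mulVec_integral _ fun l => integrable_re_pow_mul_im_pow hP.aestronglyMeasurable
      (by rwa [Nat.sub_add_cancel (Nat.lt_succ_iff.mp l.isLt)])]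
    simp_rw [Jmat_mulVec_re_pow_mul_im_pow]
  refine ⟨hunit, ?_⟩
  rw [← hmoments, mulVec_mulVec, nonsing_inv_mul _ hunit, one_mulVec]

/-- Proposition 2: `J_m` is invertible and the real joint moments of
`P = P₁ + i P₂` are obtained from the complex joint moments via `J_m⁻¹`. -/
theorem stmt_1 {Ω : Type*} [MeasurableSpace Ω] (μ : Measure Ω) [IsProbabilityMeasure μ]
    (m : ℕ) (P : Ω → ℂ) (hP : Measurable P)
    (hint : Integrable (fun ω => ‖P ω‖ ^ m) μ) :
    IsUnit (Jmat m).det ∧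
      (fun l : Fin (m + 1) =>
          ((∫ ω, (P ω).re ^ (m - (l : ℕ)) * (P ω).im ^ (l : ℕ) ∂μ : ℝ) : ℂ)) =
        (Jmat m)⁻¹ *ᵥ
          (fun k : Fin (m + 1) =>
            ∫ ω, (P ω) ^ (m - (k : ℕ)) * ((starRingEnd ℂ) (P ω)) ^ (k : ℕ) ∂μ) :=
  stmt_1_general μ m P hP hint
end

section
/- If μ_X = μ_Y = 0, then for every t ∈ ℂ the characteristic function of the product P = X·conj(Y) satisfies E_γ[ exp( i·Re( conj(t) · X · conj(Y) ) ) ] = 1 / G(t). -/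
open MeasureTheory ProbabilityTheory Finset

noncomputable section

/-- Standard Gaussian measure on `ℝ⁴` (four i.i.d. standard normals). -/
def γ : Measure (Fin 4 → ℝ) := Measure.pi fun _ => gaussianReal 0 1

/-- Standard circularly-symmetric complex Gaussian `U = (g₁ + i g₂)/√2`. -/
def U (ω : Fin 4 → ℝ) : ℂ := ((ω 0 : ℂ) + Complex.I * (ω 1 : ℂ)) / (Real.sqrt 2 : ℂ)

/-- Standard circularly-symmetric complex Gaussian `V = (g₃ + i g₄)/√2`. -/
def V (ω : Fin 4 → ℝ) : ℂ := ((ω 2 : ℂ) + Complex.I * (ω 3 : ℂ)) / (Real.sqrt 2 : ℂ)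

/-- `X = μ_X + σ_X · U`. -/
def X (μX : ℂ) (σX : ℝ) (ω : Fin 4 → ℝ) : ℂ := μX + (σX : ℂ) * U ω

/-- `Y = μ_Y + σ_Y · (conj(ρ) · U + √(1 − |ρ|²) · V)`. -/
def Y (μY : ℂ) (σY : ℝ) (ρ : ℂ) (ω : Fin 4 → ℝ) : ℂ :=
  μY + (σY : ℂ) * ((starRingEnd ℂ) ρ * U ω +
    (Real.sqrt (1 - ‖ρ‖ ^ 2) : ℂ) * V ω)

/-- `G(t) = 1 + (1/4)σ_X²σ_Y²(1−|ρ|²)|t|² − i σ_X σ_Y Re(conj(t) ρ)`. -/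
def G (σX σY : ℝ) (ρ : ℂ) (t : ℂ) : ℂ :=
  1 + (1 / 4 : ℂ) * (σX : ℂ) ^ 2 * (σY : ℂ) ^ 2 * ((1 - ‖ρ‖ ^ 2 : ℝ) : ℂ) *
      ((‖t‖ ^ 2 : ℝ) : ℂ) -
    Complex.I * (σX : ℂ) * (σY : ℂ) * ((((starRingEnd ℂ) t * ρ).re : ℝ) : ℂ)

/-!
Centering kills the mean terms, and `X · conj Y = σ_X σ_Y (ρ |U|² + √(1 - |ρ|²) U conj V)`.
Conditionally on `U` the exponent is therefore linear in `V`, and the characteristic function of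
the standard complex Gaussian, `E exp(i Re(w conj V)) = exp(-|w|²/4)`, turns the conditional
expectation into `exp(z |U|²)` with `z = i σ_X σ_Y Re(conj t ρ) - σ_X² σ_Y² (1 - |ρ|²) |t|² / 4`.
Finally `|U|² = (g₁² + g₂²)/2` is `Exp(1)`-distributed, so `E exp(z |U|²) = 1/(1 - z)`, and
`1 - z = G(t)`.
-/

open Complex Real ComplexConjugate

lemma integrable_cexp_I_mul_ofReal {Ω : Type*} [MeasurableSpace Ω] {μ : Measure Ω}
    [IsFiniteMeasure μ] {f : Ω → ℝ} (hf : Measurable f) :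
    Integrable (fun ω => cexp (I * f ω)) μ :=
  Integrable.of_bound (by fun_prop) 1 (ae_of_all _ fun _ => (norm_exp_I_mul_ofReal _).le)

lemma sq_integral_cexp_mul_sq_gaussianReal {c : ℂ} (hc : c.re < 1 / 2) :
    (∫ x, cexp (c * x ^ 2) ∂gaussianReal 0 1) ^ 2 = (1 - 2 * c)⁻¹ := by
  have hb : 0 < (1 / 2 - c).re := by rw [sub_re, div_ofNat_re, one_re]; linarith
  have hb0 : 1 / 2 - c ≠ 0 := fun h => hb.ne' (by rw [h, zero_re])
  have hdensity : ∀ x : ℝ, gaussianPDFReal 0 1 x • cexp (c * x ^ 2)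
      = ((√(2 * π) : ℝ) : ℂ)⁻¹ * cexp (-(1 / 2 - c) * x ^ 2) := by
    intro x
    simp only [gaussianPDFReal, NNReal.coe_one, mul_one, sub_zero, real_smul]
    push_cast
    rw [mul_assoc, ← Complex.exp_add]
    ring_nf
  have hsqrt : ((π / (1 / 2 - c) : ℂ) ^ (1 / 2 : ℂ)) ^ 2 = π / (1 / 2 - c) := by
    simp [cpow_ofNat_inv_pow]
  rw [integral_gaussianReal_eq_integral_smul one_ne_zero]
  simp_rw [hdensity]
  rw [integral_const_mul, integral_gaussian_complex hb, mul_pow, hsqrt, inv_pow, ← ofReal_pow,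
    Real.sq_sqrt (by positivity)]
  push_cast
  field_simp

namespace MeasurableEquiv

def piFinAppend (α : Type*) [MeasurableSpace α] (m n : ℕ) :
    (Fin m → α) × (Fin n → α) ≃ᵐ (Fin (m + n) → α) :=
  (sumPiEquivProdPi fun _ => α).symm.trans (piCongrLeft (fun _ => α) finSumFinEquiv)

end MeasurableEquiv

section PiFinAppend

variable {α E : Type*} [MeasurableSpace α] [NormedAddCommGroup E] [NormedSpace ℝ E]
  {m n : ℕ} (μ : Measure α) [SigmaFinite μ]

lemma measurePreserving_piFinAppend :
    MeasurePreserving (MeasurableEquiv.piFinAppend α m n)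
      ((Measure.pi fun _ => μ).prod (Measure.pi fun _ => μ)) (Measure.pi fun _ => μ) :=
  (measurePreserving_sumPiEquivProdPi_symm fun _ => μ).trans
    (measurePreserving_piCongrLeft (fun _ => μ) finSumFinEquiv)

lemma integral_pi_fin_add {f : (Fin (m + n) → α) → E}
    (hf : Integrable f (Measure.pi fun _ => μ)) :
    ∫ x, f x ∂(Measure.pi fun _ => μ) =
      ∫ x, ∫ y, f (MeasurableEquiv.piFinAppend α m n (x, y)) ∂(Measure.pi fun _ => μ)
        ∂(Measure.pi fun _ => μ) := by
  have hμ := measurePreserving_piFinAppend (m := m) (n := n) μ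
  rw [← hμ.integral_comp', integral_prod]
  exact hμ.integrable_comp_emb (MeasurableEquiv.measurableEmbedding _) |>.mpr hf

end PiFinAppend

def stdComplexGaussian (x : Fin 2 → ℝ) : ℂ := ((x 0 : ℂ) + I * (x 1 : ℂ)) / (Real.sqrt 2 : ℂ)

local notation "γ₂" => Measure.pi fun _ : Fin 2 => gaussianReal 0 1

lemma U_piFinAppend (x y : Fin 2 → ℝ) :
    U (MeasurableEquiv.piFinAppend ℝ 2 2 (x, y)) = stdComplexGaussian x := rfl

lemma V_piFinAppend (x y : Fin 2 → ℝ) :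
    V (MeasurableEquiv.piFinAppend ℝ 2 2 (x, y)) = stdComplexGaussian y := rfl

lemma sq_norm_stdComplexGaussian (x : Fin 2 → ℝ) :
    ‖stdComplexGaussian x‖ ^ 2 = (x 0 ^ 2 + x 1 ^ 2) / 2 := by
  rw [stdComplexGaussian, norm_div, div_pow, norm_real, Real.norm_of_nonneg (by positivity),
    Real.sq_sqrt zero_le_two, Complex.sq_norm, mul_comm I, normSq_add_mul_I]

lemma re_mul_conj_stdComplexGaussian (w : ℂ) (x : Fin 2 → ℝ) :
    (w * conj (stdComplexGaussian x)).re = (w.re * x 0 + w.im * x 1) / √2 := by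
  simp only [stdComplexGaussian, map_div₀, map_add, map_mul, conj_ofReal, conj_I, ← mul_div_assoc,
    div_ofReal_re, mul_re, add_re, add_im, mul_im, ofReal_re, ofReal_im, I_re, I_im, neg_re, neg_im]
  ring

lemma integral_cexp_I_mul_re_mul_conj_stdComplexGaussian (w : ℂ) :
    ∫ x, cexp (I * (w * conj (stdComplexGaussian x)).re) ∂γ₂ = cexp (-(‖w‖ ^ 2 / 4 : ℝ)) := by
  set a : Fin 2 → ℝ := ![w.re / √2, w.im / √2]
  have hprod : ∀ x : Fin 2 → ℝ, cexp (I * (w * conj (stdComplexGaussian x)).re) =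
      ∏ i, cexp (a i * x i * I) := by
    intro x
    rw [Fin.prod_univ_two, ← Complex.exp_add, re_mul_conj_stdComplexGaussian]
    simp only [a, Matrix.cons_val_zero, Matrix.cons_val_one]
    push_cast
    ring_nf
  have ha : a 0 ^ 2 + a 1 ^ 2 = ‖w‖ ^ 2 / 2 := by
    simp only [a, Matrix.cons_val_zero, Matrix.cons_val_one, div_pow, Real.sq_sqrt zero_le_two,
      Complex.sq_norm, normSq_apply]
    ring
  simp_rw [hprod]
  rw [integral_fintype_prod_eq_prod (fun i (y : ℝ) => cexp (a i * y * I))]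
  simp_rw [← charFun_apply_real, charFun_gaussianReal, Fin.prod_univ_two, ← Complex.exp_add]
  congr 1
  push_cast
  linear_combination (-1 / 2 : ℂ) *
    (by exact_mod_cast ha : (a 0 : ℂ) ^ 2 + (a 1 : ℂ) ^ 2 = ‖w‖ ^ 2 / 2)

lemma integral_cexp_mul_sq_norm_stdComplexGaussian {z : ℂ} (hz : z.re < 1) :
    ∫ x, cexp (z * (‖stdComplexGaussian x‖ ^ 2 : ℝ)) ∂γ₂ = (1 - z)⁻¹ := by
  have hprod : ∀ x : Fin 2 → ℝ, cexp (z * (‖stdComplexGaussian x‖ ^ 2 : ℝ)) =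
      ∏ i, cexp (z / 2 * x i ^ 2) := by
    intro x
    rw [Fin.prod_univ_two, ← Complex.exp_add, sq_norm_stdComplexGaussian]
    push_cast
    ring_nf
  simp_rw [hprod]
  rw [integral_fintype_prod_eq_pow (fun y : ℝ => cexp (z / 2 * y ^ 2)), Fintype.card_fin,
    sq_integral_cexp_mul_sq_gaussianReal (by rw [div_ofNat_re]; linarith : (z / 2).re < 1 / 2)]
  ring_nf

lemma re_conj_mul_X_mul_conj_Y (σX σY : ℝ) (ρ t : ℂ) (ω : Fin 4 → ℝ) :
    (conj t * (X 0 σX ω * conj (Y 0 σY ρ ω))).re =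
      σX * σY * (conj t * ρ).re * ‖U ω‖ ^ 2 +
        (((σX * σY * √(1 - ‖ρ‖ ^ 2) : ℝ) : ℂ) * (conj t * U ω) * conj (V ω)).re := by
  have hprod : conj t * (X 0 σX ω * conj (Y 0 σY ρ ω)) =
      ((σX * σY * ‖U ω‖ ^ 2 : ℝ) : ℂ) * (conj t * ρ) +
        ((σX * σY * √(1 - ‖ρ‖ ^ 2) : ℝ) : ℂ) * (conj t * U ω) * conj (V ω) := by
    simp only [X, Y, zero_add, map_mul, map_add, conj_ofReal, conj_conj]
    push_cast
    rw [← mul_conj']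
    ring
  rw [hprod, add_re, re_ofReal_mul]
  ring

lemma G_eq_one_sub {σX σY : ℝ} {ρ : ℂ} (hρ : ‖ρ‖ ≤ 1) (t : ℂ) :
    G σX σY ρ t = 1 - (I * (σX * σY * (conj t * ρ).re : ℝ) -
      ((σX * σY * √(1 - ‖ρ‖ ^ 2) * ‖t‖) ^ 2 / 4 : ℝ)) := by
  have hs : √(1 - ‖ρ‖ ^ 2) ^ 2 = 1 - ‖ρ‖ ^ 2 := Real.sq_sqrt (by nlinarith [norm_nonneg ρ])
  simp only [G, mul_pow, hs]
  push_cast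
  ring

theorem stmt_6_general (μX μY : ℂ) (σX σY : ℝ)
    (ρ : ℂ) (hρ : ‖ρ‖ < 1) (hμX : μX = 0) (hμY : μY = 0) (t : ℂ) :
    ∫ ω, Complex.exp (Complex.I *
        ((((starRingEnd ℂ) t * (X μX σX ω * (starRingEnd ℂ) (Y μY σY ρ ω))).re : ℝ) : ℂ)) ∂γ =
      1 / G σX σY ρ t := by
  subst hμX hμY
  rw [γ]
  refine (integral_pi_fin_add (m := 2) (n := 2) _
    (integrable_cexp_I_mul_ofReal (by simp only [X, Y, U, V]; fun_prop))).trans ?_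
  simp_rw [re_conj_mul_X_mul_conj_Y, U_piFinAppend, V_piFinAppend]
  set β := σX * σY * √(1 - ‖ρ‖ ^ 2)
  set z : ℂ := I * (σX * σY * (conj t * ρ).re : ℝ) - ((β * ‖t‖) ^ 2 / 4 : ℝ)
  have hz : z.re < 1 := by
    simp only [z, sub_re, mul_re, I_re, I_im, ofReal_re, ofReal_im]
    nlinarith [sq_nonneg (β * ‖t‖)]
  have hG : G σX σY ρ t = 1 - z := G_eq_one_sub hρ.le t
  have hconditional : ∀ x : Fin 2 → ℝ, ∫ y, cexp (I * ((σX * σY * (conj t * ρ).re *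
      ‖stdComplexGaussian x‖ ^ 2 + ((β : ℂ) * (conj t * stdComplexGaussian x) *
        conj (stdComplexGaussian y)).re : ℝ) : ℂ)) ∂γ₂ =
      cexp (z * (‖stdComplexGaussian x‖ ^ 2 : ℝ)) := by
    intro x
    simp_rw [ofReal_add, mul_add, Complex.exp_add]
    rw [integral_const_mul, integral_cexp_I_mul_re_mul_conj_stdComplexGaussian, ← Complex.exp_add]
    simp only [z, norm_mul, norm_real, Real.norm_eq_abs, RCLike.norm_conj, mul_pow, sq_abs]
    push_cast
    ring_nf
  simp_rw [hconditional, integral_cexp_mul_sq_norm_stdComplexGaussian hz, hG, one_div]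

/-- Null-hypothesis specialization: if `μ_X = μ_Y = 0` then the characteristic
function of the product `P = X conj(Y)` is `1 / G(t)`. -/
theorem stmt_6 (μX μY : ℂ) (σX σY : ℝ) (hσX : 0 < σX) (hσY : 0 < σY)
    (ρ : ℂ) (hρ : ‖ρ‖ < 1) (hμX : μX = 0) (hμY : μY = 0) (t : ℂ) :
    ∫ ω, Complex.exp (Complex.I *
        ((((starRingEnd ℂ) t * (X μX σX ω * (starRingEnd ℂ) (Y μY σY ρ ω))).re : ℝ) : ℂ)) ∂γ =
      1 / G σX σY ρ t :=
  stmt_6_general μX μY σX σY ρ hρ hμX hμY t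
end
end
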